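/- Let H be a locally compact Hausdorff topological group acting freely and properly on the right of a topological groupoid Γ by automorphisms, and let {λᵘ}_{u ∈ Γ⁰} be a left Haar system on Γ that is H-invariant, meaning ∫ f(x·h) dλᵘ(x) = ∫ f(x) dλ^{u·h}(x) for all f ∈ C_c(Γ), u ∈ Γ⁰, h ∈ H. Then the formula ∫_{Γ/H} f(xH) dλ̇^{uH}(xH) = ∫_Γ f(xH) dλᵘ(x), for f ∈ C_c(Γ/H), is independent of the choice of representative u of the orbit uH, and the resulting family {λ̇^{uH}}_{uH ∈ Γ⁰/H} is a left Haar system on the quotient groupoid Γ/H. -/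

import Mathlib

open MeasureTheory Filter Topology

/-- A topological groupoid: a space `Γ` with a set of units, continuous open range and
source maps onto the units, a (partially meaningful, totalized) continuous multiplication
defined for composable pairs, and a continuous inversion. -/
structure TopGroupoid (Γ : Type*) [TopologicalSpace Γ] where
  unit : Set Γ
  rng : Γ → Γ
  src : Γ → Γ
  mul : Γ → Γ → Γ
  inv : Γ → Γ
  rng_mem : ∀ x, rng x ∈ unit
  src_mem : ∀ x, src x ∈ unit
  rng_unit : ∀ u ∈ unit, rng u = u
  src_unit : ∀ u ∈ unit, src u = u
  continuous_rng : Continuous rng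
  continuous_src : Continuous src
  open_rng : ∀ U : Set Γ, IsOpen U → ∃ V : Set Γ, IsOpen V ∧ rng '' U = V ∩ unit
  open_src : ∀ U : Set Γ, IsOpen U → ∃ V : Set Γ, IsOpen V ∧ src '' U = V ∩ unit
  continuous_mul : ContinuousOn (fun p : Γ × Γ => mul p.1 p.2) {p : Γ × Γ | src p.1 = rng p.2}
  continuous_inv : Continuous inv
  rng_mul : ∀ x y, src x = rng y → rng (mul x y) = rng x
  src_mul : ∀ x y, src x = rng y → src (mul x y) = src y
  mul_assoc' : ∀ x y z, src x = rng y → src y = rng z → mul (mul x y) z = mul x (mul y z)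
  rng_mul_self : ∀ x, mul (rng x) x = x
  mul_src_self : ∀ x, mul x (src x) = x
  inv_inv' : ∀ x, inv (inv x) = x
  src_inv : ∀ x, src (inv x) = rng x
  rng_inv : ∀ x, rng (inv x) = src x
  inv_mul' : ∀ x, mul (inv x) x = src x
  mul_inv' : ∀ x, mul x (inv x) = rng x

section Actions

variable {Γ : Type*} [TopologicalSpace Γ]

/-- A (continuous) right action of a group `H` on a topological groupoid by automorphisms. -/
structure GroupRightAction (𝒢 : TopGroupoid Γ) (H : Type*) [TopologicalSpace H] [Group H] where
  act : Γ → H → Γ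
  continuous_act : Continuous fun p : Γ × H => act p.1 p.2
  act_one : ∀ x, act x 1 = x
  act_mul : ∀ x (h k : H), act (act x h) k = act x (h * k)
  unit_act : ∀ u ∈ 𝒢.unit, ∀ h : H, act u h ∈ 𝒢.unit
  src_act : ∀ x h, 𝒢.src (act x h) = act (𝒢.src x) h
  rng_act : ∀ x h, 𝒢.rng (act x h) = act (𝒢.rng x) h
  mul_act : ∀ x y h, 𝒢.src x = 𝒢.rng y → 𝒢.mul (act x h) (act y h) = act (𝒢.mul x y) h
  inv_act : ∀ x h, 𝒢.inv (act x h) = act (𝒢.inv x) h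

namespace GroupRightAction

variable {𝒢 : TopGroupoid Γ} {H : Type*} [TopologicalSpace H] [Group H]

/-- The action is free. -/
def Free (A : GroupRightAction 𝒢 H) : Prop := ∀ x h, A.act x h = x → h = 1

/-- The action is proper: `(x,h) ↦ (x·h, x)` has compact preimages of compact sets. -/
def Proper (A : GroupRightAction 𝒢 H) : Prop :=
  ∀ K : Set (Γ × Γ), IsCompact K → IsCompact {p : Γ × H | (A.act p.1 p.2, p.1) ∈ K}

/-- The orbit equivalence relation. -/
def setoid (A : GroupRightAction 𝒢 H) : Setoid Γ where
  r x y := ∃ h : H, A.act x h = y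
  iseqv := by
    refine ⟨fun x => ⟨1, A.act_one x⟩, ?_, ?_⟩
    · rintro x y ⟨h, rfl⟩
      exact ⟨h⁻¹, by rw [A.act_mul]; simp [A.act_one]⟩
    · rintro x y z ⟨h, rfl⟩ ⟨k, rfl⟩
      exact ⟨h * k, (A.act_mul x h k).symm⟩

end GroupRightAction

/-- A (continuous) left action of a group `G` on a topological groupoid by automorphisms. -/
structure GroupLeftAction (𝒢 : TopGroupoid Γ) (G : Type*) [TopologicalSpace G] [Group G] where
  act : G → Γ → Γ
  continuous_act : Continuous fun p : G × Γ => act p.1 p.2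
  one_act : ∀ x, act 1 x = x
  act_act : ∀ (t u : G) (x : Γ), act t (act u x) = act (t * u) x
  unit_act : ∀ u ∈ 𝒢.unit, ∀ t : G, act t u ∈ 𝒢.unit
  src_act : ∀ t x, 𝒢.src (act t x) = act t (𝒢.src x)
  rng_act : ∀ t x, 𝒢.rng (act t x) = act t (𝒢.rng x)
  mul_act : ∀ t x y, 𝒢.src x = 𝒢.rng y → 𝒢.mul (act t x) (act t y) = act t (𝒢.mul x y)
  inv_act : ∀ t x, 𝒢.inv (act t x) = act t (𝒢.inv x)

namespace GroupLeftAction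

variable {𝒢 : TopGroupoid Γ} {G : Type*} [TopologicalSpace G] [Group G]

/-- The action is free. -/
def Free (A : GroupLeftAction 𝒢 G) : Prop := ∀ t x, A.act t x = x → t = 1

/-- The action is proper: `(t,x) ↦ (t·x, x)` has compact preimages of compact sets. -/
def Proper (A : GroupLeftAction 𝒢 G) : Prop :=
  ∀ K : Set (Γ × Γ), IsCompact K → IsCompact {p : G × Γ | (A.act p.1 p.2, p.2) ∈ K}

/-- The orbit equivalence relation. -/
def setoid (A : GroupLeftAction 𝒢 G) : Setoid Γ where
  r x y := ∃ t : G, A.act t x = y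
  iseqv := by
    refine ⟨fun x => ⟨1, A.one_act x⟩, ?_, ?_⟩
    · rintro x y ⟨t, rfl⟩
      exact ⟨t⁻¹, by rw [A.act_act]; simp [A.one_act]⟩
    · rintro x y z ⟨t, rfl⟩ ⟨u, rfl⟩
      exact ⟨u * t, (A.act_act u t x).symm⟩

end GroupLeftAction

/-- A left action of a topological groupoid `𝒢` on a space `Ω`, with fibre map `ρ`. -/
structure GroupoidLeftAction (𝒢 : TopGroupoid Γ) (Ω : Type*) [TopologicalSpace Ω] where
  ρ : Ω → Γ
  act : Γ → Ω → Ω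
  ρ_mem : ∀ u, ρ u ∈ 𝒢.unit
  continuous_ρ : Continuous ρ
  ρ_surj : ∀ v ∈ 𝒢.unit, ∃ u, ρ u = v
  open_ρ : ∀ U : Set Ω, IsOpen U → ∃ V : Set Γ, IsOpen V ∧ ρ '' U = V ∩ 𝒢.unit
  continuous_act : ContinuousOn (fun p : Γ × Ω => act p.1 p.2) {p : Γ × Ω | 𝒢.src p.1 = ρ p.2}
  ρ_act : ∀ x u, 𝒢.src x = ρ u → ρ (act x u) = 𝒢.rng x
  unit_act : ∀ u, act (ρ u) u = u
  act_act : ∀ x y u, 𝒢.src y = ρ u → 𝒢.src x = 𝒢.rng y → act x (act y u) = act (𝒢.mul x y) u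

namespace GroupoidLeftAction

variable {𝒢 : TopGroupoid Γ} {Ω : Type*} [TopologicalSpace Ω]

/-- The action is free. -/
def Free (A : GroupoidLeftAction 𝒢 Ω) : Prop :=
  ∀ x u, 𝒢.src x = A.ρ u → A.act x u = u → x ∈ 𝒢.unit

/-- The action is proper: `(x,u) ↦ (x·u, u)` on the composable set has compact preimages of
compact sets. -/
def Proper (A : GroupoidLeftAction 𝒢 Ω) : Prop :=
  ∀ K : Set (Ω × Ω), IsCompact K →
    IsCompact {p : Γ × Ω | 𝒢.src p.1 = A.ρ p.2 ∧ (A.act p.1 p.2, p.2) ∈ K}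

/-- The orbit equivalence relation on `Ω`. -/
def setoid (A : GroupoidLeftAction 𝒢 Ω) : Setoid Ω where
  r u v := ∃ x, 𝒢.src x = A.ρ u ∧ A.act x u = v
  iseqv := by
    constructor
    · exact fun u => ⟨A.ρ u, 𝒢.src_unit _ (A.ρ_mem u), A.unit_act u⟩
    · rintro u v ⟨x, hx, rfl⟩
      refine ⟨𝒢.inv x, ?_, ?_⟩
      · rw [𝒢.src_inv, A.ρ_act x u hx]
      · rw [A.act_act _ x u hx (𝒢.src_inv x), 𝒢.inv_mul', hx, A.unit_act]
    · rintro u v w ⟨x, hx, rfl⟩ ⟨y, hy, rfl⟩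
      have hyr : 𝒢.src y = 𝒢.rng x := by rw [hy, A.ρ_act x u hx]
      refine ⟨𝒢.mul y x, ?_, ?_⟩
      · rw [𝒢.src_mul y x hyr, hx]
      · rw [← A.act_act y x u hx hyr]

end GroupoidLeftAction

/-- A right action of a topological groupoid `𝒢` on a space `Ω`, with fibre map `σ`. -/
structure GroupoidRightAction (𝒢 : TopGroupoid Γ) (Ω : Type*) [TopologicalSpace Ω] where
  σ : Ω → Γ
  act : Ω → Γ → Ω
  σ_mem : ∀ u, σ u ∈ 𝒢.unit
  continuous_σ : Continuous σ
  σ_surj : ∀ v ∈ 𝒢.unit, ∃ u, σ u = v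
  open_σ : ∀ U : Set Ω, IsOpen U → ∃ V : Set Γ, IsOpen V ∧ σ '' U = V ∩ 𝒢.unit
  continuous_act : ContinuousOn (fun p : Ω × Γ => act p.1 p.2) {p : Ω × Γ | σ p.1 = 𝒢.rng p.2}
  σ_act : ∀ u x, σ u = 𝒢.rng x → σ (act u x) = 𝒢.src x
  unit_act : ∀ u, act u (σ u) = u
  act_act : ∀ u x y, σ u = 𝒢.rng x → 𝒢.src x = 𝒢.rng y → act (act u x) y = act u (𝒢.mul x y)

namespace GroupoidRightAction

variable {𝒢 : TopGroupoid Γ} {Ω : Type*} [TopologicalSpace Ω]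

/-- The action is free. -/
def Free (A : GroupoidRightAction 𝒢 Ω) : Prop :=
  ∀ u x, A.σ u = 𝒢.rng x → A.act u x = u → x ∈ 𝒢.unit

/-- The action is proper. -/
def Proper (A : GroupoidRightAction 𝒢 Ω) : Prop :=
  ∀ K : Set (Ω × Ω), IsCompact K →
    IsCompact {p : Ω × Γ | A.σ p.1 = 𝒢.rng p.2 ∧ (A.act p.1 p.2, p.1) ∈ K}

/-- The orbit equivalence relation on `Ω`. -/
def setoid (A : GroupoidRightAction 𝒢 Ω) : Setoid Ω where
  r u v := ∃ x, A.σ u = 𝒢.rng x ∧ A.act u x = v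
  iseqv := by
    constructor
    · exact fun u => ⟨A.σ u, (𝒢.rng_unit _ (A.σ_mem u)).symm, A.unit_act u⟩
    · rintro u v ⟨x, hx, rfl⟩
      refine ⟨𝒢.inv x, ?_, ?_⟩
      · rw [𝒢.rng_inv, A.σ_act u x hx]
      · rw [A.act_act u x _ hx (𝒢.rng_inv x).symm, 𝒢.mul_inv', ← hx, A.unit_act]
    · rintro u v w ⟨x, hx, rfl⟩ ⟨y, hy, rfl⟩
      have hxy : 𝒢.src x = 𝒢.rng y := by rw [← A.σ_act u x hx, hy]
      refine ⟨𝒢.mul x y, ?_, ?_⟩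
      · rw [𝒢.rng_mul x y hxy, hx]
      · rw [A.act_act u x y hx hxy]

end GroupoidRightAction

end Actions

/-- A left Haar system on a topological groupoid: a family of Radon measures indexed by the
units, with support `r⁻¹(u)`, continuous in `u`, and left invariant. -/
def IsHaarSystem {Γ : Type*} [TopologicalSpace Γ] [MeasurableSpace Γ]
    (𝒢 : TopGroupoid Γ) (lam : Γ → Measure Γ) : Prop :=
  (∀ u ∈ 𝒢.unit, ∀ K : Set Γ, IsCompact K → lam u K < ⊤) ∧
  (∀ u ∈ 𝒢.unit, lam u {x | 𝒢.rng x ≠ u} = 0) ∧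
  (∀ u ∈ 𝒢.unit, ∀ V : Set Γ, IsOpen V → (V ∩ 𝒢.rng ⁻¹' {u}).Nonempty → 0 < lam u V) ∧
  (∀ f : Γ → ℝ, Continuous f → HasCompactSupport f →
    ContinuousOn (fun u => ∫ x, f x ∂(lam u)) 𝒢.unit) ∧
  (∀ x : Γ, ∀ f : Γ → ℝ, Continuous f → HasCompactSupport f →
    ∫ y, f (𝒢.mul x y) ∂(lam (𝒢.src x)) = ∫ y, f y ∂(lam (𝒢.rng x)))

/-!
The pushforward of `λᵘ` along `Γ → Γ/H` depends only on the orbit `uH`. For `f ∈ C_c(Γ/H)` the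
function `f ∘ q` is not compactly supported, but properness of the action makes
`{x | r x ∈ N, xH ∈ supp f}` compact for compact `N`, so on `r⁻¹(N)` it agrees with some
`g ∈ C_c(Γ)`. Applying `H`-invariance, continuity and left invariance of `λ` to such cut-offs `g`
gives the corresponding properties of the pushforward family; continuity descends to `Γ⁰/H`
because `q` is open and `Γ⁰` is `H`-saturated.
-/

open Set Function

theorem IsOpenQuotientMap.exists_isCompact_image_superset {X Y : Type*} [TopologicalSpace X]
    [TopologicalSpace Y] [WeaklyLocallyCompactSpace X] {π : X → Y} (hπ : IsOpenQuotientMap π)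
    {K : Set Y} (hK : IsCompact K) : ∃ L, IsCompact L ∧ K ⊆ π '' L := by
  choose s hs hsx using fun x : X ↦ exists_compact_mem_nhds x
  obtain ⟨t, -, hKt⟩ := hK.elim_nhds_subcover (fun y ↦ π '' s (surjInv hπ.surjective y))
    fun y _ ↦ by
      have := hπ.isOpenMap.image_mem_nhds (hsx (surjInv hπ.surjective y))
      rwa [surjInv_eq hπ.surjective] at this
  refine ⟨⋃ y ∈ t, s (surjInv hπ.surjective y), t.isCompact_biUnion fun y _ ↦ hs _, ?_⟩
  rwa [image_iUnion₂]

theorem IsOpenMap.continuousOn_image_of_comp {X Y Z : Type*} [TopologicalSpace X]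
    [TopologicalSpace Y] [TopologicalSpace Z] {π : X → Y} (hπ : IsOpenMap π) {S : Set X}
    (hS : π ⁻¹' (π '' S) = S) {F : Y → Z} (hF : ContinuousOn (F ∘ π) S) :
    ContinuousOn F (π '' S) := by
  rintro _ ⟨x, hx, rfl⟩
  have hnhds : 𝓝[π '' S] (π x) ≤ map π (𝓝[S] x) :=
    calc 𝓝[π '' S] (π x) ≤ map π (𝓝 x) ⊓ 𝓟 (π '' S) := inf_le_inf_right _ (hπ.nhds_le x)
      _ = map π (𝓝[S] x) := by rw [← map_inf_principal_preimage, hS]; rfl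
  exact (tendsto_map'_iff.2 (hF x hx)).mono_left hnhds

instance Quotient.opensMeasurableSpace {α : Type*} [TopologicalSpace α] [MeasurableSpace α]
    [OpensMeasurableSpace α] {s : Setoid α} : OpensMeasurableSpace (Quotient s) where
  borel_le := MeasurableSpace.generateFrom_le fun _ hU ↦
    measurableSet_quotient.2 (hU.preimage continuous_quotient_mk').measurableSet

theorem integral_map_of_continuousOn {α β : Type*} [MeasurableSpace α] [MeasurableSpace β]
    [TopologicalSpace β] [OpensMeasurableSpace β] {μ : Measure α} {π : α → β}
    (hπ : Measurable π) {S : Set β} (hS : MeasurableSet S) (hμS : ∀ᵐ x ∂μ, π x ∈ S)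
    {F : β → ℝ} (hF : ContinuousOn F S) :
    ∫ y, F y ∂(μ.map π) = ∫ x, F (π x) ∂μ := by
  refine integral_map hπ.aemeasurable ?_
  rw [← Measure.restrict_eq_self_of_ae_mem ((ae_map_iff hπ.aemeasurable hS).2 hμS)]
  exact hF.aestronglyMeasurable hS

theorem TopGroupoid.ae_rng_eq {Γ : Type*} [TopologicalSpace Γ] [MeasurableSpace Γ]
    {𝒢 : TopGroupoid Γ} {lam : Γ → Measure Γ}
    (hnull : ∀ u ∈ 𝒢.unit, lam u {x | 𝒢.rng x ≠ u} = 0) {u : Γ} (hu : u ∈ 𝒢.unit) :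
    ∀ᵐ x ∂(lam u), 𝒢.rng x = u :=
  ae_iff.2 (hnull u hu)

namespace GroupRightAction

variable {Γ H : Type*} [TopologicalSpace Γ] [TopologicalSpace H] [Group H]
  {𝒢 : TopGroupoid Γ} (RA : GroupRightAction 𝒢 H)

theorem mk_eq_mk_iff {x y : Γ} :
    Quotient.mk RA.setoid x = Quotient.mk RA.setoid y ↔ ∃ h, RA.act x h = y :=
  Quotient.eq

theorem mk_act (x : Γ) (h : H) : Quotient.mk RA.setoid (RA.act x h) = Quotient.mk RA.setoid x :=
  (RA.mk_eq_mk_iff).2 ⟨h⁻¹, by rw [RA.act_mul, mul_inv_cancel, RA.act_one]⟩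

theorem exists_act_out_eq (x : Γ) : ∃ h, RA.act (Quotient.mk RA.setoid x).out h = x :=
  Quotient.mk_out (s := RA.setoid) x

theorem mem_unit_of_mk_eq {u v : Γ} (hu : u ∈ 𝒢.unit)
    (huv : Quotient.mk RA.setoid u = Quotient.mk RA.setoid v) : v ∈ 𝒢.unit := by
  obtain ⟨h, rfl⟩ := RA.mk_eq_mk_iff.1 huv
  exact RA.unit_act u hu h

theorem out_mem_unit {u : Γ} (hu : u ∈ 𝒢.unit) : (Quotient.mk RA.setoid u).out ∈ 𝒢.unit :=
  RA.mem_unit_of_mk_eq hu (Quotient.out_eq _).symm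

theorem exists_mk_eq_out_src_eq (z : Quotient RA.setoid) :
    ∃ x, Quotient.mk RA.setoid x = z ∧ (Quotient.mk RA.setoid (𝒢.src x)).out = 𝒢.src x := by
  obtain ⟨x, rfl⟩ := Quotient.mk_surjective z
  obtain ⟨h, hh⟩ := RA.exists_act_out_eq (𝒢.src x)
  refine ⟨RA.act x h⁻¹, RA.mk_act x h⁻¹, ?_⟩
  rw [RA.src_act, RA.mk_act]
  conv_rhs => rw [← hh]
  rw [RA.act_mul, mul_inv_cancel, RA.act_one]

theorem continuous_act_right (h : H) : Continuous (RA.act · h) :=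
  RA.continuous_act.comp (continuous_id.prodMk continuous_const)

theorem isOpenQuotientMap_mk : IsOpenQuotientMap (Quotient.mk RA.setoid) where
  surjective := Quotient.mk_surjective
  continuous := continuous_quotient_mk'
  isOpenMap U hU := by
    have hsat : Quotient.mk RA.setoid ⁻¹' (Quotient.mk RA.setoid '' U)
        = ⋃ h : H, (RA.act · h) ⁻¹' U := by
      ext x
      simp only [mem_preimage, mem_image, mem_iUnion, RA.mk_eq_mk_iff]
      constructor
      · rintro ⟨y, hy, h, rfl⟩
        exact ⟨h⁻¹, by rwa [RA.act_mul, mul_inv_cancel, RA.act_one]⟩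
      · rintro ⟨h, hh⟩
        exact ⟨_, hh, h⁻¹, by rw [RA.act_mul, mul_inv_cancel, RA.act_one]⟩
    rw [← isQuotientMap_quotient_mk'.isOpen_preimage]
    change IsOpen (Quotient.mk RA.setoid ⁻¹' _)
    rw [hsat]
    exact isOpen_iUnion fun h ↦ hU.preimage (RA.continuous_act_right h)

theorem t2Space_quotient [T2Space Γ] [LocallyCompactSpace Γ] (hproper : RA.Proper) :
    T2Space (Quotient RA.setoid) := by
  have hF : IsProperMap fun p : Γ × H ↦ (RA.act p.1 p.2, p.1) :=
    isProperMap_iff_isCompact_preimage.2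
      ⟨RA.continuous_act.prodMk continuous_fst, fun K hK ↦ hproper K hK⟩
  rw [t2Space_iff_of_isOpenQuotientMap RA.isOpenQuotientMap_mk]
  have hrel : {q : Γ × Γ | Quotient.mk RA.setoid q.1 = Quotient.mk RA.setoid q.2}
      = Prod.swap ⁻¹' range fun p : Γ × H ↦ (RA.act p.1 p.2, p.1) := by
    ext ⟨x, y⟩
    simp [RA.mk_eq_mk_iff]
  rw [hrel]
  exact hF.isClosedMap.isClosed_range.preimage continuous_swap

section LocallyCompact

variable [T2Space Γ] [LocallyCompactSpace Γ]

theorem isCompact_setOf_rng_mem_mk_mem (hproper : RA.Proper) {N : Set Γ} (hN : IsCompact N)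
    {K : Set (Quotient RA.setoid)} (hK : IsCompact K) :
    IsCompact {x | 𝒢.rng x ∈ N ∧ Quotient.mk RA.setoid x ∈ K} := by
  have := RA.t2Space_quotient hproper
  obtain ⟨L, hL, hKL⟩ := RA.isOpenQuotientMap_mk.exists_isCompact_image_superset hK
  have hT : IsCompact (Prod.snd '' {p : Γ × H | (RA.act p.1 p.2, p.1) ∈ N ×ˢ (𝒢.rng '' L)}) :=
    (hproper _ (hN.prod (hL.image 𝒢.continuous_rng))).image continuous_snd
  refine ((hL.prod hT).image RA.continuous_act).of_isClosed_subset
    ((hN.isClosed.preimage 𝒢.continuous_rng).inter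
      (hK.isClosed.preimage continuous_quotient_mk')) ?_
  rintro x ⟨hxN, hxK⟩
  obtain ⟨l, hl, hlx⟩ := hKL hxK
  obtain ⟨h, rfl⟩ := RA.mk_eq_mk_iff.1 hlx
  exact ⟨(l, h), ⟨hl, (𝒢.rng l, h), ⟨by rwa [← RA.rng_act], l, hl, rfl⟩, rfl⟩, rfl⟩

theorem exists_hasCompactSupport_eq_comp_mk (hproper : RA.Proper) {N : Set Γ}
    (hN : IsCompact N) {f : Quotient RA.setoid → ℝ} (hf : Continuous f)
    (hfs : HasCompactSupport f) :
    ∃ g : Γ → ℝ, Continuous g ∧ HasCompactSupport g ∧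
      ∀ x, 𝒢.rng x ∈ N → g x = f (Quotient.mk RA.setoid x) := by
  obtain ⟨χ, hχ1, -, hχs, -⟩ := exists_continuous_one_zero_of_isCompact
    (RA.isCompact_setOf_rng_mem_mk_mem hproper hN hfs) isClosed_empty (disjoint_empty _)
  refine ⟨fun x ↦ f (Quotient.mk RA.setoid x) * χ x,
    (hf.comp continuous_quotient_mk').mul χ.continuous, hχs.mul_left, fun x hx ↦ ?_⟩
  by_cases hxf : Quotient.mk RA.setoid x ∈ tsupport f
  · simp [hχ1 ⟨hx, hxf⟩]
  · simp [image_eq_zero_of_notMem_tsupport hxf]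

end LocallyCompact

variable [MeasurableSpace Γ] {lam : Γ → Measure Γ}

theorem measurable_mk : Measurable (Quotient.mk RA.setoid) :=
  measurable_quotient_mk''

noncomputable def quotientHaarFamily (lam : Γ → Measure Γ) (z : Quotient RA.setoid) :
    Measure (Quotient RA.setoid) :=
  (lam z.out).map (Quotient.mk RA.setoid)

section OpensMeasurable

variable [OpensMeasurableSpace Γ]

theorem quotientHaarFamily_mk_apply_rng_ne [T1Space (Quotient RA.setoid)]
    {Q : TopGroupoid (Quotient RA.setoid)}
    (hQrng : ∀ x : Γ, Q.rng (Quotient.mk RA.setoid x) = Quotient.mk RA.setoid (𝒢.rng x))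
    (hnull : ∀ u ∈ 𝒢.unit, lam u {x | 𝒢.rng x ≠ u} = 0) {u : Γ} (hu : u ∈ 𝒢.unit) :
    RA.quotientHaarFamily lam (Quotient.mk RA.setoid u)
      {q | Q.rng q ≠ Quotient.mk RA.setoid u} = 0 := by
  have hm : MeasurableSet {q | Q.rng q ≠ Quotient.mk RA.setoid u} :=
    (isClosed_singleton.isOpen_compl.preimage Q.continuous_rng).measurableSet
  rw [quotientHaarFamily, Measure.map_apply RA.measurable_mk hm]
  refine measure_mono_null ?_ (hnull _ (RA.out_mem_unit hu))
  intro x hx hrx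
  exact hx (by rw [hQrng, hrx, Quotient.out_eq])

theorem quotientHaarFamily_mk_apply_pos
    {Q : TopGroupoid (Quotient RA.setoid)}
    (hQrng : ∀ x : Γ, Q.rng (Quotient.mk RA.setoid x) = Quotient.mk RA.setoid (𝒢.rng x))
    (hpos : ∀ u ∈ 𝒢.unit, ∀ V : Set Γ, IsOpen V → (V ∩ 𝒢.rng ⁻¹' {u}).Nonempty → 0 < lam u V)
    {u : Γ} (hu : u ∈ 𝒢.unit) {V : Set (Quotient RA.setoid)} (hV : IsOpen V)
    (hne : (V ∩ Q.rng ⁻¹' {Quotient.mk RA.setoid u}).Nonempty) :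
    0 < RA.quotientHaarFamily lam (Quotient.mk RA.setoid u) V := by
  obtain ⟨⟨y⟩, hyV, hy⟩ := hne
  obtain ⟨h, hh⟩ : ∃ h, RA.act (𝒢.rng y) h = (Quotient.mk RA.setoid u).out := by
    rw [← RA.mk_eq_mk_iff, ← hQrng, Quotient.out_eq]
    exact hy
  rw [quotientHaarFamily, Measure.map_apply RA.measurable_mk hV.measurableSet]
  refine hpos _ (RA.out_mem_unit hu) _ (hV.preimage continuous_quotient_mk')
    ⟨RA.act y h, ?_, ?_⟩
  · rw [mem_preimage, RA.mk_act]
    exact hyV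
  · rw [mem_preimage, RA.rng_act, hh]
    rfl

end OpensMeasurable

variable [T2Space Γ] [LocallyCompactSpace Γ]

theorem integral_comp_mk_act (hproper : RA.Proper)
    (hnull : ∀ u ∈ 𝒢.unit, lam u {x | 𝒢.rng x ≠ u} = 0)
    (hinvariant : ∀ u ∈ 𝒢.unit, ∀ h : H, ∀ f : Γ → ℝ, Continuous f → HasCompactSupport f →
      ∫ x, f (RA.act x h) ∂(lam u) = ∫ x, f x ∂(lam (RA.act u h)))
    {u : Γ} (hu : u ∈ 𝒢.unit) (h : H) {f : Quotient RA.setoid → ℝ} (hf : Continuous f)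
    (hfs : HasCompactSupport f) :
    ∫ x, f (Quotient.mk RA.setoid x) ∂(lam u)
      = ∫ x, f (Quotient.mk RA.setoid x) ∂(lam (RA.act u h)) := by
  obtain ⟨g, hg, hgs, hgf⟩ := RA.exists_hasCompactSupport_eq_comp_mk hproper
    (isCompact_singleton (x := RA.act u h)) hf hfs
  calc ∫ x, f (Quotient.mk RA.setoid x) ∂(lam u) = ∫ x, g (RA.act x h) ∂(lam u) :=
        integral_congr_ae <| (𝒢.ae_rng_eq hnull hu).mono fun x hx ↦ by
          dsimp only
          rw [hgf _ (by rw [RA.rng_act, hx]; rfl), RA.mk_act]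
    _ = ∫ x, g x ∂(lam (RA.act u h)) := hinvariant u hu h g hg hgs
    _ = _ := integral_congr_ae <| (𝒢.ae_rng_eq hnull (RA.unit_act u hu h)).mono hgf

theorem integral_comp_mk_mul (hproper : RA.Proper)
    (hnull : ∀ u ∈ 𝒢.unit, lam u {x | 𝒢.rng x ≠ u} = 0)
    (hinvL : ∀ x : Γ, ∀ f : Γ → ℝ, Continuous f → HasCompactSupport f →
      ∫ y, f (𝒢.mul x y) ∂(lam (𝒢.src x)) = ∫ y, f y ∂(lam (𝒢.rng x)))
    (x : Γ) {f : Quotient RA.setoid → ℝ} (hf : Continuous f) (hfs : HasCompactSupport f) :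
    ∫ y, f (Quotient.mk RA.setoid (𝒢.mul x y)) ∂(lam (𝒢.src x))
      = ∫ y, f (Quotient.mk RA.setoid y) ∂(lam (𝒢.rng x)) := by
  obtain ⟨g, hg, hgs, hgf⟩ := RA.exists_hasCompactSupport_eq_comp_mk hproper
    (isCompact_singleton (x := 𝒢.rng x)) hf hfs
  calc _ = ∫ y, g (𝒢.mul x y) ∂(lam (𝒢.src x)) :=
        integral_congr_ae <| (𝒢.ae_rng_eq hnull (𝒢.src_mem x)).mono fun y hy ↦
          (hgf _ (𝒢.rng_mul x y hy.symm)).symm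
    _ = ∫ y, g y ∂(lam (𝒢.rng x)) := hinvL x g hg hgs
    _ = _ := integral_congr_ae <| (𝒢.ae_rng_eq hnull (𝒢.rng_mem x)).mono hgf

theorem continuousOn_integral_comp_mk (hproper : RA.Proper)
    (hnull : ∀ u ∈ 𝒢.unit, lam u {x | 𝒢.rng x ≠ u} = 0)
    (hcont : ∀ f : Γ → ℝ, Continuous f → HasCompactSupport f →
      ContinuousOn (fun u ↦ ∫ x, f x ∂(lam u)) 𝒢.unit)
    {f : Quotient RA.setoid → ℝ} (hf : Continuous f) (hfs : HasCompactSupport f) :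
    ContinuousOn (fun u ↦ ∫ x, f (Quotient.mk RA.setoid x) ∂(lam u)) 𝒢.unit := by
  intro u hu
  obtain ⟨N, hN, hNu⟩ := exists_compact_mem_nhds u
  obtain ⟨g, hg, hgs, hgf⟩ := RA.exists_hasCompactSupport_eq_comp_mk hproper hN hf hfs
  have hgN : ∀ v ∈ 𝒢.unit, v ∈ N →
      ∫ x, f (Quotient.mk RA.setoid x) ∂(lam v) = ∫ x, g x ∂(lam v) := fun v hv hvN ↦
    integral_congr_ae <| (𝒢.ae_rng_eq hnull hv).mono fun x hx ↦ (hgf x (hx ▸ hvN)).symm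
  refine (hcont g hg hgs u hu).congr_of_eventuallyEq ?_ (hgN u hu (mem_of_mem_nhds hNu))
  filter_upwards [self_mem_nhdsWithin, mem_nhdsWithin_of_mem_nhds hNu] using hgN

variable [OpensMeasurableSpace Γ]

theorem quotientHaarFamily_mk_apply_lt_top (hproper : RA.Proper)
    (hfin : ∀ u ∈ 𝒢.unit, ∀ K : Set Γ, IsCompact K → lam u K < ⊤)
    (hnull : ∀ u ∈ 𝒢.unit, lam u {x | 𝒢.rng x ≠ u} = 0) {u : Γ} (hu : u ∈ 𝒢.unit)
    {K : Set (Quotient RA.setoid)} (hK : IsCompact K) :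
    RA.quotientHaarFamily lam (Quotient.mk RA.setoid u) K < ⊤ := by
  have := RA.t2Space_quotient hproper
  set v := (Quotient.mk RA.setoid u).out
  have hv : v ∈ 𝒢.unit := RA.out_mem_unit hu
  rw [quotientHaarFamily, Measure.map_apply RA.measurable_mk hK.measurableSet]
  calc lam v (Quotient.mk RA.setoid ⁻¹' K)
      ≤ lam v {x | 𝒢.rng x ∈ ({v} : Set Γ) ∧ Quotient.mk RA.setoid x ∈ K} :=
        measure_mono_ae <| (𝒢.ae_rng_eq hnull hv).mono fun x hx hxK ↦ ⟨hx, hxK⟩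
    _ < ⊤ := hfin v hv _ (RA.isCompact_setOf_rng_mem_mk_mem hproper isCompact_singleton hK)

theorem integral_quotientHaarFamily_mk (hproper : RA.Proper)
    (hnull : ∀ u ∈ 𝒢.unit, lam u {x | 𝒢.rng x ≠ u} = 0)
    (hinvariant : ∀ u ∈ 𝒢.unit, ∀ h : H, ∀ f : Γ → ℝ, Continuous f → HasCompactSupport f →
      ∫ x, f (RA.act x h) ∂(lam u) = ∫ x, f x ∂(lam (RA.act u h)))
    {u : Γ} (hu : u ∈ 𝒢.unit) {f : Quotient RA.setoid → ℝ} (hf : Continuous f)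
    (hfs : HasCompactSupport f) :
    ∫ z, f z ∂(RA.quotientHaarFamily lam (Quotient.mk RA.setoid u))
      = ∫ x, f (Quotient.mk RA.setoid x) ∂(lam u) := by
  obtain ⟨h, hh⟩ := RA.exists_act_out_eq u
  have := RA.integral_comp_mk_act hproper hnull hinvariant (RA.out_mem_unit hu) h hf hfs
  rw [hh] at this
  rw [quotientHaarFamily,
    integral_map RA.measurable_mk.aemeasurable hf.aestronglyMeasurable, this]

theorem continuousOn_integral_quotientHaarFamily (hproper : RA.Proper)
    (hnull : ∀ u ∈ 𝒢.unit, lam u {x | 𝒢.rng x ≠ u} = 0)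
    (hinvariant : ∀ u ∈ 𝒢.unit, ∀ h : H, ∀ f : Γ → ℝ, Continuous f → HasCompactSupport f →
      ∫ x, f (RA.act x h) ∂(lam u) = ∫ x, f x ∂(lam (RA.act u h)))
    (hcont : ∀ f : Γ → ℝ, Continuous f → HasCompactSupport f →
      ContinuousOn (fun u ↦ ∫ x, f x ∂(lam u)) 𝒢.unit)
    {f : Quotient RA.setoid → ℝ} (hf : Continuous f) (hfs : HasCompactSupport f) :
    ContinuousOn (fun z ↦ ∫ q, f q ∂(RA.quotientHaarFamily lam z))
      (Quotient.mk RA.setoid '' 𝒢.unit) := by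
  have hsat : Quotient.mk RA.setoid ⁻¹' (Quotient.mk RA.setoid '' 𝒢.unit) = 𝒢.unit :=
    Subset.antisymm (fun _ ⟨_, hu, hux⟩ ↦ RA.mem_unit_of_mk_eq hu hux)
      (subset_preimage_image _ _)
  refine RA.isOpenQuotientMap_mk.isOpenMap.continuousOn_image_of_comp hsat ?_
  exact (RA.continuousOn_integral_comp_mk hproper hnull hcont hf hfs).congr fun u hu ↦
    RA.integral_quotientHaarFamily_mk hproper hnull hinvariant hu hf hfs

theorem integral_mul_quotientHaarFamily (hproper : RA.Proper)
    (hnull : ∀ u ∈ 𝒢.unit, lam u {x | 𝒢.rng x ≠ u} = 0)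
    (hinvariant : ∀ u ∈ 𝒢.unit, ∀ h : H, ∀ f : Γ → ℝ, Continuous f → HasCompactSupport f →
      ∫ x, f (RA.act x h) ∂(lam u) = ∫ x, f x ∂(lam (RA.act u h)))
    (hinvL : ∀ x : Γ, ∀ f : Γ → ℝ, Continuous f → HasCompactSupport f →
      ∫ y, f (𝒢.mul x y) ∂(lam (𝒢.src x)) = ∫ y, f y ∂(lam (𝒢.rng x)))
    {Q : TopGroupoid (Quotient RA.setoid)}
    (hQrng : ∀ x : Γ, Q.rng (Quotient.mk RA.setoid x) = Quotient.mk RA.setoid (𝒢.rng x))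
    (hQsrc : ∀ x : Γ, Q.src (Quotient.mk RA.setoid x) = Quotient.mk RA.setoid (𝒢.src x))
    (hQmul : ∀ x y : Γ, 𝒢.src x = 𝒢.rng y →
      Q.mul (Quotient.mk RA.setoid x) (Quotient.mk RA.setoid y)
        = Quotient.mk RA.setoid (𝒢.mul x y))
    (z : Quotient RA.setoid) {f : Quotient RA.setoid → ℝ} (hf : Continuous f)
    (hfs : HasCompactSupport f) :
    ∫ q, f (Q.mul z q) ∂(RA.quotientHaarFamily lam (Q.src z))
      = ∫ q, f q ∂(RA.quotientHaarFamily lam (Q.rng z)) := by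
  have := RA.t2Space_quotient hproper
  -- with `s x` the representative used by `quotientHaarFamily`, `λ̇^{s(x)H}` is literally
  -- the pushforward of `λ^{s x}`
  obtain ⟨x, rfl, hx⟩ := RA.exists_mk_eq_out_src_eq z
  have hcomp : ∀ᵐ y ∂(lam (𝒢.src x)), 𝒢.src x = 𝒢.rng y :=
    (𝒢.ae_rng_eq hnull (𝒢.src_mem x)).mono fun _ hy ↦ hy.symm
  have hmul : ContinuousOn (Q.mul (Quotient.mk RA.setoid x))
      {q | Q.src (Quotient.mk RA.setoid x) = Q.rng q} :=
    Q.continuous_mul.comp (continuous_const.prodMk continuous_id).continuousOn fun _ hq ↦ hq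
  calc ∫ q, f (Q.mul (Quotient.mk RA.setoid x) q)
        ∂(RA.quotientHaarFamily lam (Q.src (Quotient.mk RA.setoid x)))
      = ∫ y, f (Q.mul (Quotient.mk RA.setoid x) (Quotient.mk RA.setoid y))
          ∂(lam (𝒢.src x)) := by
        rw [hQsrc, quotientHaarFamily, hx]
        refine integral_map_of_continuousOn RA.measurable_mk
          (isClosed_eq continuous_const Q.continuous_rng).measurableSet ?_
          (hf.comp_continuousOn hmul)
        filter_upwards [hcomp] with y hy
        show Q.src _ = Q.rng (Quotient.mk RA.setoid y)
        rw [hQsrc, hQrng, hy]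
    _ = ∫ y, f (Quotient.mk RA.setoid (𝒢.mul x y)) ∂(lam (𝒢.src x)) :=
        integral_congr_ae <| hcomp.mono fun y hy ↦ by simp only [hQmul x y hy]
    _ = ∫ y, f (Quotient.mk RA.setoid y) ∂(lam (𝒢.rng x)) :=
        RA.integral_comp_mk_mul hproper hnull hinvL x hf hfs
    _ = ∫ q, f q ∂(RA.quotientHaarFamily lam (Q.rng (Quotient.mk RA.setoid x))) := by
        rw [hQrng,
          RA.integral_quotientHaarFamily_mk hproper hnull hinvariant (𝒢.rng_mem x) hf hfs]

end GroupRightAction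

theorem quotient_groupoid_haar_system_general
    {Γ H : Type*} [TopologicalSpace Γ] [T2Space Γ] [LocallyCompactSpace Γ]
    [MeasurableSpace Γ] [BorelSpace Γ]
    [TopologicalSpace H] [Group H]
    (𝒢 : TopGroupoid Γ) (RA : GroupRightAction 𝒢 H)
    (hproper : RA.Proper)
    (lam : Γ → MeasureTheory.Measure Γ) (hHaar : IsHaarSystem 𝒢 lam)
    (hinvariant : ∀ u ∈ 𝒢.unit, ∀ h : H, ∀ f : Γ → ℝ, Continuous f → HasCompactSupport f →
      ∫ x, f (RA.act x h) ∂(lam u) = ∫ x, f x ∂(lam (RA.act u h)))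
    (Q : TopGroupoid (Quotient RA.setoid))
    (hQunit : Q.unit = Quotient.mk RA.setoid '' 𝒢.unit)
    (hQrng : ∀ x : Γ, Q.rng (Quotient.mk RA.setoid x) = Quotient.mk RA.setoid (𝒢.rng x))
    (hQsrc : ∀ x : Γ, Q.src (Quotient.mk RA.setoid x) = Quotient.mk RA.setoid (𝒢.src x))
    (hQmul : ∀ x y : Γ, 𝒢.src x = 𝒢.rng y →
      Q.mul (Quotient.mk RA.setoid x) (Quotient.mk RA.setoid y)
        = Quotient.mk RA.setoid (𝒢.mul x y)) :
    ∃ lamQ : Quotient RA.setoid → MeasureTheory.Measure (Quotient RA.setoid),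
      (∀ u ∈ 𝒢.unit, ∀ f : Quotient RA.setoid → ℝ, Continuous f → HasCompactSupport f →
        ∫ z, f z ∂(lamQ (Quotient.mk RA.setoid u))
          = ∫ x, f (Quotient.mk RA.setoid x) ∂(lam u)) ∧
      IsHaarSystem Q lamQ := by
  obtain ⟨hfin, hnull, hpos, hcont, hinvL⟩ := hHaar
  have := RA.t2Space_quotient hproper
  refine ⟨RA.quotientHaarFamily lam,
    fun u hu f hf hfs ↦ RA.integral_quotientHaarFamily_mk hproper hnull hinvariant hu hf hfs,
    ?_, ?_, ?_, ?_, ?_⟩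
  · rw [hQunit]
    rintro _ ⟨u, hu, rfl⟩ K hK
    exact RA.quotientHaarFamily_mk_apply_lt_top hproper hfin hnull hu hK
  · rw [hQunit]
    rintro _ ⟨u, hu, rfl⟩
    exact RA.quotientHaarFamily_mk_apply_rng_ne hQrng hnull hu
  · rw [hQunit]
    rintro _ ⟨u, hu, rfl⟩ V hV hne
    exact RA.quotientHaarFamily_mk_apply_pos hQrng hpos hu hV hne
  · rw [hQunit]
    exact fun f hf hfs ↦
      RA.continuousOn_integral_quotientHaarFamily hproper hnull hinvariant hcont hf hfs
  · exact fun z f hf hfs ↦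
      RA.integral_mul_quotientHaarFamily hproper hnull hinvariant hinvL hQrng hQsrc hQmul z hf hfs

/-- An `H`-invariant left Haar system on `Γ` descends to a left Haar
system on the quotient groupoid `Γ/H`, via
`∫_{Γ/H} f(xH) dλ̇^{uH}(xH) = ∫_Γ f(xH) dλᵘ(x)`. -/
theorem quotient_groupoid_haar_system
    {Γ H : Type*} [TopologicalSpace Γ] [T2Space Γ] [LocallyCompactSpace Γ]
    [MeasurableSpace Γ] [BorelSpace Γ]
    [TopologicalSpace H] [Group H] [IsTopologicalGroup H] [T2Space H] [LocallyCompactSpace H]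
    (𝒢 : TopGroupoid Γ) (RA : GroupRightAction 𝒢 H)
    (hfree : RA.Free) (hproper : RA.Proper)
    (lam : Γ → MeasureTheory.Measure Γ) (hHaar : IsHaarSystem 𝒢 lam)
    (hinvariant : ∀ u ∈ 𝒢.unit, ∀ h : H, ∀ f : Γ → ℝ, Continuous f → HasCompactSupport f →
      ∫ x, f (RA.act x h) ∂(lam u) = ∫ x, f x ∂(lam (RA.act u h)))
    (Q : TopGroupoid (Quotient RA.setoid))
    (hQunit : Q.unit = Quotient.mk RA.setoid '' 𝒢.unit)
    (hQrng : ∀ x : Γ, Q.rng (Quotient.mk RA.setoid x) = Quotient.mk RA.setoid (𝒢.rng x))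
    (hQsrc : ∀ x : Γ, Q.src (Quotient.mk RA.setoid x) = Quotient.mk RA.setoid (𝒢.src x))
    (hQmul : ∀ x y : Γ, 𝒢.src x = 𝒢.rng y →
      Q.mul (Quotient.mk RA.setoid x) (Quotient.mk RA.setoid y)
        = Quotient.mk RA.setoid (𝒢.mul x y))
    (hQinv : ∀ x : Γ, Q.inv (Quotient.mk RA.setoid x) = Quotient.mk RA.setoid (𝒢.inv x)) :
    ∃ lamQ : Quotient RA.setoid → MeasureTheory.Measure (Quotient RA.setoid),
      (∀ u ∈ 𝒢.unit, ∀ f : Quotient RA.setoid → ℝ, Continuous f → HasCompactSupport f →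
        ∫ z, f z ∂(lamQ (Quotient.mk RA.setoid u))
          = ∫ x, f (Quotient.mk RA.setoid x) ∂(lam u)) ∧
      IsHaarSystem Q lamQ :=
  quotient_groupoid_haar_system_general 𝒢 RA hproper lam hHaar hinvariant Q hQunit hQrng hQsrc hQmul
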